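/- arXiv:1903.00276 — 5 statements merged into one kernel-verified Lean document; each statement's English description precedes it below -/
import Mathlib

section
/- Let A, B : ℝ² → ℝ be smooth functions of (v, T) with T > 0. The two equations p = A(v,T) and ε = B(v,T) define a Lagrangian surface for the symplectic form Ω = d(T⁻¹)∧dε + d(pT⁻¹)∧dv (equivalently, their Poisson bracket vanishes on the surface) if and only if ∂/∂v (T⁻² B) = ∂/∂T (T⁻¹ A). -/
open ContinuousLinearMap

noncomputable def pbracket (f g : ℝ × ℝ × ℝ × ℝ → ℝ) (x : ℝ × ℝ × ℝ × ℝ) : ℝ :=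
  (1 / 2) * (x.2.2.1 * x.2.2.2 *
      (fderiv ℝ f x (0, 0, 1, 0) * fderiv ℝ g x (0, 1, 0, 0)
        - fderiv ℝ f x (0, 1, 0, 0) * fderiv ℝ g x (0, 0, 1, 0))
    + x.2.2.2 ^ 2 *
      (fderiv ℝ f x (0, 0, 0, 1) * fderiv ℝ g x (0, 1, 0, 0)
        - fderiv ℝ f x (0, 1, 0, 0) * fderiv ℝ g x (0, 0, 0, 1))
    + x.2.2.2 *
      (fderiv ℝ f x (1, 0, 0, 0) * fderiv ℝ g x (0, 0, 1, 0)
        - fderiv ℝ f x (0, 0, 1, 0) * fderiv ℝ g x (1, 0, 0, 0)))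

section aux

/-- projection (v,ε,p,T) ↦ (v,T) as a CLM -/
noncomputable def projVT : (ℝ × ℝ × ℝ × ℝ) →L[ℝ] ℝ × ℝ :=
  (fst ℝ ℝ (ℝ × ℝ × ℝ)).prod
    ((snd ℝ ℝ ℝ).comp ((snd ℝ ℝ (ℝ × ℝ)).comp (snd ℝ ℝ (ℝ × ℝ × ℝ))))

lemma projVT_apply (y : ℝ × ℝ × ℝ × ℝ) : projVT y = (y.1, y.2.2.2) := rfl

/-- p-coordinate as CLM -/
noncomputable def coordP : (ℝ × ℝ × ℝ × ℝ) →L[ℝ] ℝ :=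
  (fst ℝ ℝ ℝ).comp ((snd ℝ ℝ (ℝ × ℝ)).comp (snd ℝ ℝ (ℝ × ℝ × ℝ)))

/-- ε-coordinate as CLM -/
noncomputable def coordE : (ℝ × ℝ × ℝ × ℝ) →L[ℝ] ℝ :=
  (fst ℝ ℝ (ℝ × ℝ)).comp (snd ℝ ℝ (ℝ × ℝ × ℝ))

lemma hasFDerivAt_surf (H : ℝ × ℝ → ℝ) (hH : Differentiable ℝ H)
    (L : (ℝ × ℝ × ℝ × ℝ) →L[ℝ] ℝ) (x : ℝ × ℝ × ℝ × ℝ) :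
    HasFDerivAt (fun y : ℝ × ℝ × ℝ × ℝ => L y - H (y.1, y.2.2.2))
      (L - (fderiv ℝ H (x.1, x.2.2.2)).comp projVT) x := by
  have h1 : HasFDerivAt (fun y : ℝ × ℝ × ℝ × ℝ => H (y.1, y.2.2.2))
      ((fderiv ℝ H (x.1, x.2.2.2)).comp projVT) x := by
    have := ((hH (x.1, x.2.2.2)).hasFDerivAt).comp x projVT.hasFDerivAt
    exact this
  exact L.hasFDerivAt.sub h1

lemma fderiv_surf (H : ℝ × ℝ → ℝ) (hH : Differentiable ℝ H)
    (L : (ℝ × ℝ × ℝ × ℝ) →L[ℝ] ℝ) (x w : ℝ × ℝ × ℝ × ℝ) :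
    fderiv ℝ (fun y : ℝ × ℝ × ℝ × ℝ => L y - H (y.1, y.2.2.2)) x w
      = L w - fderiv ℝ H (x.1, x.2.2.2) (w.1, w.2.2.2) := by
  rw [(hasFDerivAt_surf H hH L x).fderiv]; rfl

lemma deriv_slice1 (H : ℝ × ℝ → ℝ) (hH : Differentiable ℝ H) (v T : ℝ) :
    HasDerivAt (fun v' => H (v', T)) (fderiv ℝ H (v, T) (1, 0)) v := by
  have h : HasDerivAt (fun v' : ℝ => (v', T)) ((1 : ℝ), (0 : ℝ)) v :=
    (hasDerivAt_id v).prodMk (hasDerivAt_const v T)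
  exact ((hH (v, T)).hasFDerivAt).comp_hasDerivAt v h

lemma deriv_slice2 (H : ℝ × ℝ → ℝ) (hH : Differentiable ℝ H) (v T : ℝ) :
    HasDerivAt (fun T' => H (v, T')) (fderiv ℝ H (v, T) (0, 1)) T := by
  have h : HasDerivAt (fun T' : ℝ => (v, T')) ((0 : ℝ), (1 : ℝ)) T :=
    (hasDerivAt_const T v).prodMk (hasDerivAt_id T)
  exact ((hH (v, T)).hasFDerivAt).comp_hasDerivAt T h

end aux

lemma alg (a x y T : ℝ) (hT : T ≠ 0) :
    (1/2)*(a*T - T^2*x + T*y) = 0 ↔ (T^2)⁻¹*y = -(T^2)⁻¹*a + T⁻¹*x := by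
  have h2 : (T:ℝ)^2 ≠ 0 := pow_ne_zero _ hT
  constructor
  · intro h
    field_simp
    have h4 : T * (y + a - T * x) = 0 := by linear_combination 2 * h
    rcases mul_eq_zero.mp h4 with h5 | h5
    · exact absurd h5 hT
    · linarith
  · intro h
    field_simp at h
    have h3 : y * T = -(a*T) + x*T^2 := by rw [h]; ring
    linear_combination (1/2) * h3

/-- The equations p = A(v,T), ε = B(v,T) define a Lagrangian surface
(i.e. the Poisson bracket of p − A and ε − B vanishes on the surface)
iff (T⁻²B)_v = (T⁻¹A)_T. -/
theorem stmt1 (A B : ℝ → ℝ → ℝ)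
    (hA : ContDiff ℝ (⊤ : ℕ∞) fun q : ℝ × ℝ => A q.1 q.2)
    (hB : ContDiff ℝ (⊤ : ℕ∞) fun q : ℝ × ℝ => B q.1 q.2) :
    (∀ v T : ℝ, 0 < T →
        pbracket (fun x => x.2.2.1 - A x.1 x.2.2.2) (fun x => x.2.1 - B x.1 x.2.2.2)
          (v, B v T, A v T, T) = 0)
      ↔ ∀ v T : ℝ, 0 < T →
          deriv (fun v' => (T ^ 2)⁻¹ * B v' T) v = deriv (fun T' => T'⁻¹ * A v T') T := by
  set F : ℝ × ℝ → ℝ := fun q => A q.1 q.2 with hF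
  set G : ℝ × ℝ → ℝ := fun q => B q.1 q.2 with hG
  have hFd : Differentiable ℝ F := hA.differentiable (by simp)
  have hGd : Differentiable ℝ G := hB.differentiable (by simp)
  -- abbreviations for partials
  have key : ∀ v T : ℝ, 0 < T →
      (pbracket (fun x => x.2.2.1 - A x.1 x.2.2.2) (fun x => x.2.1 - B x.1 x.2.2.2)
          (v, B v T, A v T, T)
        = (1 / 2) * (A v T * T - T ^ 2 * fderiv ℝ F (v, T) (0, 1)
            + T * fderiv ℝ G (v, T) (1, 0))) := by
    intro v T hT
    have hf : ∀ w : ℝ × ℝ × ℝ × ℝ,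
        fderiv ℝ (fun x : ℝ × ℝ × ℝ × ℝ => x.2.2.1 - A x.1 x.2.2.2) (v, B v T, A v T, T) w
          = coordP w - fderiv ℝ F (v, T) (w.1, w.2.2.2) := by
      intro w
      exact fderiv_surf F hFd coordP (v, B v T, A v T, T) w
    have hg : ∀ w : ℝ × ℝ × ℝ × ℝ,
        fderiv ℝ (fun x : ℝ × ℝ × ℝ × ℝ => x.2.1 - B x.1 x.2.2.2) (v, B v T, A v T, T) w
          = coordE w - fderiv ℝ G (v, T) (w.1, w.2.2.2) := by
      intro w
      exact fderiv_surf G hGd coordE (v, B v T, A v T, T) w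
    simp only [pbracket, hf, hg]
    have e1 : ((0:ℝ), (0:ℝ)) = (0 : ℝ × ℝ) := rfl
    simp only [coordP, coordE, coe_comp', Function.comp_apply, coe_snd', coe_fst', e1, map_zero,
      Prod.fst_zero, Prod.snd_zero]
    ring
  have keyR : ∀ v T : ℝ, 0 < T →
      (deriv (fun v' => (T ^ 2)⁻¹ * B v' T) v = (T ^ 2)⁻¹ * fderiv ℝ G (v, T) (1, 0)
        ∧ deriv (fun T' => T'⁻¹ * A v T') T
            = -(T ^ 2)⁻¹ * A v T + T⁻¹ * fderiv ℝ F (v, T) (0, 1)) := by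
    intro v T hT
    have hT0 : T ≠ 0 := ne_of_gt hT
    constructor
    · have h1 : HasDerivAt (fun v' => (T ^ 2)⁻¹ * B v' T)
          ((T ^ 2)⁻¹ * fderiv ℝ G (v, T) (1, 0)) v :=
        (deriv_slice1 G hGd v T).const_mul _
      exact h1.deriv
    · have h1 : HasDerivAt (fun T' : ℝ => T'⁻¹) (-(T ^ 2)⁻¹) T := by
        simpa using hasDerivAt_inv hT0
      have h2 : HasDerivAt (fun T' => A v T') (fderiv ℝ F (v, T) (0, 1)) T :=
        deriv_slice2 F hFd v T
      have := h1.mul h2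
      simpa [mul_comm, Pi.mul_def] using this.deriv
  constructor
  · intro h v T hT
    have h0 := h v T hT
    rw [key v T hT] at h0
    obtain ⟨e1, e2⟩ := keyR v T hT
    rw [e1, e2]
    exact (alg (A v T) (fderiv ℝ F (v, T) (0, 1)) (fderiv ℝ G (v, T) (1, 0)) T
      (ne_of_gt hT)).mp h0
  · intro h v T hT
    have h0 := h v T hT
    obtain ⟨e1, e2⟩ := keyR v T hT
    rw [e1, e2] at h0
    rw [key v T hT]
    exact (alg (A v T) (fderiv ℝ F (v, T) (0, 1)) (fderiv ℝ G (v, T) (1, 0)) T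
      (ne_of_gt hT)).mpr h0
end

section
/- For the reduced van der Waals gas, the phase-equivalence system φ_v(v₂,T) = φ_v(v₁,T) and φ(v₂,T) − φ(v₁,T) − v₂φ_v(v₂,T) + v₁φ_v(v₁,T) = 0 with φ = ln(T^{n/2}(3v−1)) + 9/(8vT) is equivalent (for v₁ ≠ v₂, both > 1/3) to the pair: ((3v₁−1)(3v₂−1)(v₁+v₂)/(v₁−v₂)) ln((3v₂−1)/(3v₁−1)) = 3(v₁+v₂−6v₁v₂) and T = (v₁+v₂)(3v₁−1)(3v₂−1)/(8v₁²v₂²). -/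
/-! The equal-slope condition `φ_v(v₂) = φ_v(v₁)` is linear in `1/T` and, after dividing by
`v₁ - v₂`, pins down `T`. In the equal-tangent condition the `ln T` terms cancel, and
substituting this `T` leaves the logarithmic equation in `v₁, v₂` alone. -/

noncomputable def pdv (f : ℝ → ℝ → ℝ) (v T : ℝ) : ℝ := deriv (fun v' => f v' T) v

open Real

noncomputable def vdwPotential (n : ℝ) : ℝ → ℝ → ℝ :=
  fun v T => log (T ^ (n / 2) * (3 * v - 1)) + 9 / (8 * v * T)

theorem pdv_vdwPotential (n : ℝ) {v T : ℝ} (hT : 0 < T) (hv : v ≠ 0) (hv' : 3 * v - 1 ≠ 0) :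
    pdv (vdwPotential n) v T = 3 / (3 * v - 1) - 9 / (8 * v ^ 2 * T) := by
  have hlin : HasDerivAt (fun v' : ℝ => T ^ (n / 2) * (3 * v' - 1)) (T ^ (n / 2) * 3) v := by
    simpa using (((hasDerivAt_id v).const_mul 3).sub_const 1).const_mul (T ^ (n / 2))
  have hden : HasDerivAt (fun v' : ℝ => 8 * v' * T) (8 * T) v := by
    simpa using ((hasDerivAt_id v).const_mul 8).mul_const T
  have hTn : T ^ (n / 2) ≠ 0 := (rpow_pos_of_pos hT _).ne'
  have h : HasDerivAt (fun v' => vdwPotential n v' T) _ v :=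
    (hlin.log (mul_ne_zero hTn hv')).add ((hasDerivAt_const v (9 : ℝ)).div hden (by positivity))
  rw [pdv, h.deriv]
  field_simp
  ring

theorem vdwPotential_sub (n : ℝ) {v₁ v₂ T : ℝ} (hT : 0 < T)
    (hv₁ : 3 * v₁ - 1 ≠ 0) (hv₂ : 3 * v₂ - 1 ≠ 0) :
    vdwPotential n v₂ T - vdwPotential n v₁ T
      = log ((3 * v₂ - 1) / (3 * v₁ - 1)) + 9 / (8 * v₂ * T) - 9 / (8 * v₁ * T) := by
  have hTn : T ^ (n / 2) ≠ 0 := (rpow_pos_of_pos hT _).ne'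
  simp only [vdwPotential, log_mul hTn hv₁, log_mul hTn hv₂, log_div hv₂ hv₁]
  ring

theorem vdw_slope_eq_iff {v₁ v₂ T : ℝ} (hT : T ≠ 0) (hv₁ : 1 / 3 < v₁) (hv₂ : 1 / 3 < v₂)
    (hne : v₁ ≠ v₂) :
    3 / (3 * v₂ - 1) - 9 / (8 * v₂ ^ 2 * T) = 3 / (3 * v₁ - 1) - 9 / (8 * v₁ ^ 2 * T)
      ↔ T = (v₁ + v₂) * (3 * v₁ - 1) * (3 * v₂ - 1) / (8 * v₁ ^ 2 * v₂ ^ 2) := by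
  have h₁ : 3 * v₁ - 1 ≠ 0 := by linarith
  have h₂ : 3 * v₂ - 1 ≠ 0 := by linarith
  have h₁' : v₁ ≠ 0 := by linarith
  have h₂' : v₂ ≠ 0 := by linarith
  have hdiff : 3 / (3 * v₂ - 1) - 9 / (8 * v₂ ^ 2 * T) - (3 / (3 * v₁ - 1) - 9 / (8 * v₁ ^ 2 * T))
      = 9 * (v₁ - v₂) * (T * (8 * v₁ ^ 2 * v₂ ^ 2) - (v₁ + v₂) * (3 * v₁ - 1) * (3 * v₂ - 1))
        / (8 * v₁ ^ 2 * v₂ ^ 2 * T * ((3 * v₁ - 1) * (3 * v₂ - 1))) := by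
    field_simp
    ring
  rw [← sub_eq_zero, hdiff, div_eq_zero_iff, or_iff_left (by positivity), mul_eq_zero,
    or_iff_right (mul_ne_zero (by norm_num) (sub_ne_zero.mpr hne)), sub_eq_zero,
    eq_div_iff (by positivity)]

theorem vdw_tangent_eq_zero_iff {v₁ v₂ T : ℝ} (L : ℝ) (hv₁ : 1 / 3 < v₁) (hv₂ : 1 / 3 < v₂)
    (hne : v₁ ≠ v₂) (hT : T = (v₁ + v₂) * (3 * v₁ - 1) * (3 * v₂ - 1) / (8 * v₁ ^ 2 * v₂ ^ 2)) :
    L + 9 / (8 * v₂ * T) - 9 / (8 * v₁ * T) - v₂ * (3 / (3 * v₂ - 1) - 9 / (8 * v₂ ^ 2 * T))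
        + v₁ * (3 / (3 * v₁ - 1) - 9 / (8 * v₁ ^ 2 * T)) = 0
      ↔ (3 * v₁ - 1) * (3 * v₂ - 1) * (v₁ + v₂) / (v₁ - v₂) * L
          = 3 * (v₁ + v₂ - 6 * v₁ * v₂) := by
  have h₁ : 3 * v₁ - 1 ≠ 0 := by linarith
  have h₂ : 3 * v₂ - 1 ≠ 0 := by linarith
  have h₁' : v₁ ≠ 0 := by linarith
  have h₂' : v₂ ≠ 0 := by linarith
  have hsum : v₁ + v₂ ≠ 0 := by linarith
  have hsub : v₁ - v₂ ≠ 0 := sub_ne_zero.mpr hne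
  have hres : L + 9 / (8 * v₂ * T) - 9 / (8 * v₁ * T) - v₂ * (3 / (3 * v₂ - 1) - 9 / (8 * v₂ ^ 2 * T))
        + v₁ * (3 / (3 * v₁ - 1) - 9 / (8 * v₁ ^ 2 * T))
      = L - 3 * (v₁ + v₂ - 6 * v₁ * v₂) * (v₁ - v₂) / ((3 * v₁ - 1) * (3 * v₂ - 1) * (v₁ + v₂)) := by
    have hT0 : T ≠ 0 := by rw [hT]; positivity
    have hT' : T * (8 * v₁ ^ 2 * v₂ ^ 2) = (v₁ + v₂) * (3 * v₁ - 1) * (3 * v₂ - 1) := by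
      rw [hT]; field_simp
    have h₁'' : v₁ * 3 - 1 ≠ 0 := by linarith
    have h₂'' : v₂ * 3 - 1 ≠ 0 := by linarith
    field_simp
    linear_combination -18 * (v₁ - v₂) * hT'
  rw [hres, sub_eq_zero, div_mul_eq_mul_div, div_eq_iff hsub, eq_div_iff (by positivity)]
  constructor <;> intro h <;> linarith

theorem stmt13_general (n : ℝ)
    (φ : ℝ → ℝ → ℝ)
    (hφ : φ = fun v T => Real.log (T ^ (n / 2) * (3 * v - 1)) + 9 / (8 * v * T))
    (v₁ v₂ T : ℝ) (hv₁ : 1 / 3 < v₁) (hv₂ : 1 / 3 < v₂) (hne : v₁ ≠ v₂) (hT : 0 < T) :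
    (pdv φ v₂ T = pdv φ v₁ T
      ∧ φ v₂ T - φ v₁ T - v₂ * pdv φ v₂ T + v₁ * pdv φ v₁ T = 0)
    ↔ ((3 * v₁ - 1) * (3 * v₂ - 1) * (v₁ + v₂) / (v₁ - v₂)
          * Real.log ((3 * v₂ - 1) / (3 * v₁ - 1)) = 3 * (v₁ + v₂ - 6 * v₁ * v₂)
        ∧ T = (v₁ + v₂) * (3 * v₁ - 1) * (3 * v₂ - 1) / (8 * v₁ ^ 2 * v₂ ^ 2)) := by
  have hφ' : φ = vdwPotential n := hφ
  have h₁ : 3 * v₁ - 1 ≠ 0 := by linarith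
  have h₂ : 3 * v₂ - 1 ≠ 0 := by linarith
  rw [hφ', pdv_vdwPotential n hT (by linarith) h₁, pdv_vdwPotential n hT (by linarith) h₂,
    vdwPotential_sub n hT h₁ h₂, vdw_slope_eq_iff hT.ne' hv₁ hv₂ hne]
  exact and_comm.trans (and_congr_left fun hTeq => vdw_tangent_eq_zero_iff _ hv₁ hv₂ hne hTeq)

/-- For the reduced van der Waals potential φ(v,T) = ln(T^{n/2}(3v−1)) + 9/(8vT),
the phase-equivalence system is equivalent (for v₁ ≠ v₂, both > 1/3) to
((3v₁−1)(3v₂−1)(v₁+v₂)/(v₁−v₂))·ln((3v₂−1)/(3v₁−1)) = 3(v₁+v₂−6v₁v₂) together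
with T = (v₁+v₂)(3v₁−1)(3v₂−1)/(8v₁²v₂²). -/
theorem stmt13 (n : ℝ) (hn : 0 < n)
    (φ : ℝ → ℝ → ℝ)
    (hφ : φ = fun v T => Real.log (T ^ (n / 2) * (3 * v - 1)) + 9 / (8 * v * T))
    (v₁ v₂ T : ℝ) (hv₁ : 1 / 3 < v₁) (hv₂ : 1 / 3 < v₂) (hne : v₁ ≠ v₂) (hT : 0 < T) :
    (pdv φ v₂ T = pdv φ v₁ T
      ∧ φ v₂ T - φ v₁ T - v₂ * pdv φ v₂ T + v₁ * pdv φ v₁ T = 0)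
    ↔ ((3 * v₁ - 1) * (3 * v₂ - 1) * (v₁ + v₂) / (v₁ - v₂)
          * Real.log ((3 * v₂ - 1) / (3 * v₁ - 1)) = 3 * (v₁ + v₂ - 6 * v₁ * v₂)
        ∧ T = (v₁ + v₂) * (3 * v₁ - 1) * (3 * v₂ - 1) / (8 * v₁ ^ 2 * v₂ ^ 2)) :=
  stmt13_general n φ hφ v₁ v₂ T hv₁ hv₂ hne hT
end

section
/- On the Lagrangian surface defined by p = RT φ_v and ε = RT² φ_T, and along a level curve of σ = R(φ + T φ_T), one has dp ≡ −v⁻²c² dv where v⁻²c² = R(T²(φ_Tv² − φ_TT φ_vv) + 2T(φ_v φ_vT − φ_T φ_vv) + φ_v²)/(2φ_T + T φ_TT). -/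
/-- Partial derivative in the second variable T. -/
noncomputable def pdT (f : ℝ → ℝ → ℝ) (v T : ℝ) : ℝ := deriv (fun T' => f v T') T

/-- On the Lagrangian surface given by p = RTφ_v, ε = RT²φ_T, along a level
curve of σ = R(φ + Tφ_T): p_vσ_T − p_Tσ_v = −(v⁻²c²)σ_T, where
v⁻²c² = R(T²(φ_Tv² − φ_TTφ_vv) + 2T(φ_vφ_vT − φ_Tφ_vv) + φ_v²)/(2φ_T + Tφ_TT). -/
theorem stmt16 (R : ℝ) (hR : 0 < R) (φ : ℝ → ℝ → ℝ)
    (hφ : ContDiff ℝ (⊤ : ℕ∞) fun q : ℝ × ℝ => φ q.1 q.2)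
    (pf σf : ℝ → ℝ → ℝ)
    (hp : pf = fun v' T' => R * T' * pdv φ v' T')
    (hσ : σf = fun v' T' => R * (φ v' T' + T' * pdT φ v' T'))
    (v T : ℝ) (hv : 0 < v) (hT : 0 < T)
    (hden : 2 * pdT φ v T + T * pdT (fun v' T' => pdT φ v' T') v T ≠ 0)
    (c2v2 : ℝ)
    (hc2 : c2v2 = R *
        (T ^ 2 * ((pdv (fun v' T' => pdT φ v' T') v T) ^ 2
            - pdT (fun v' T' => pdT φ v' T') v T * pdv (fun v' T' => pdv φ v' T') v T)
          + 2 * T * (pdv φ v T * pdv (fun v' T' => pdT φ v' T') v T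
            - pdT φ v T * pdv (fun v' T' => pdv φ v' T') v T)
          + (pdv φ v T) ^ 2)
        / (2 * pdT φ v T + T * pdT (fun v' T' => pdT φ v' T') v T)) :
    pdv pf v T * pdT σf v T - pdT pf v T * pdv σf v T = -c2v2 * pdT σf v T := by
  set F : ℝ × ℝ → ℝ := fun q => φ q.1 q.2 with hF
  have hFd : Differentiable ℝ F := hφ.differentiable (by simp)
  have hfd : ContDiff ℝ (⊤ : ℕ∞) (fderiv ℝ F) := hφ.fderiv_right (by simp)
  set f1 : ℝ × ℝ → ℝ := fun q => fderiv ℝ F q (1, 0) with hf1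
  set f2 : ℝ × ℝ → ℝ := fun q => fderiv ℝ F q (0, 1) with hf2
  have hf1d : Differentiable ℝ f1 := (hfd.clm_apply contDiff_const).differentiable (by simp)
  have hf2d : Differentiable ℝ f2 := (hfd.clm_apply contDiff_const).differentiable (by simp)
  have key_v : ∀ (G : ℝ × ℝ → ℝ), Differentiable ℝ G → ∀ a b : ℝ,
      HasDerivAt (fun v' => G (v', b)) (fderiv ℝ G (a, b) (1, 0)) a := by
    intro G hG a b
    exact (hG (a, b)).hasFDerivAt.comp_hasDerivAt a ((hasDerivAt_id a).prodMk (hasDerivAt_const a b))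
  have key_T : ∀ (G : ℝ × ℝ → ℝ), Differentiable ℝ G → ∀ a b : ℝ,
      HasDerivAt (fun T' => G (a, T')) (fderiv ℝ G (a, b) (0, 1)) b := by
    intro G hG a b
    exact (hG (a, b)).hasFDerivAt.comp_hasDerivAt b ((hasDerivAt_const b a).prodMk (hasDerivAt_id b))
  have hφv : ∀ a b : ℝ, pdv φ a b = f1 (a, b) := fun a b => (key_v F hFd a b).deriv
  have hφT : ∀ a b : ℝ, pdT φ a b = f2 (a, b) := fun a b => (key_T F hFd a b).deriv
  -- second derivatives
  set A : ℝ := fderiv ℝ f1 (v, T) (1, 0) with hA   -- φ_vv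
  set D : ℝ := fderiv ℝ f1 (v, T) (0, 1) with hD   -- φ_vT
  set E : ℝ := fderiv ℝ f2 (v, T) (1, 0) with hE   -- φ_Tv
  set M : ℝ := fderiv ℝ f2 (v, T) (0, 1) with hM   -- φ_TT
  have hsymDE : D = E := by
    have hF2d : DifferentiableAt ℝ (fderiv ℝ F) (v, T) :=
      (hfd.differentiable (by simp)) (v, T)
    have h1 : fderiv ℝ f1 (v, T) = (fderiv ℝ (fderiv ℝ F) (v, T)).flip (1, 0) := by
      rw [hf1]
      rw [fderiv_clm_apply hF2d (differentiableAt_const _)]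
      simp
    have h2 : fderiv ℝ f2 (v, T) = (fderiv ℝ (fderiv ℝ F) (v, T)).flip (0, 1) := by
      rw [hf2]
      rw [fderiv_clm_apply hF2d (differentiableAt_const _)]
      simp
    have hsym := second_derivative_symmetric (f := F) (f' := fderiv ℝ F)
      (f'' := fderiv ℝ (fderiv ℝ F) (v, T)) (x := (v, T))
      (fun y => (hFd y).hasFDerivAt) hF2d.hasFDerivAt (0, 1) (1, 0)
    rw [hD, hE, h1, h2]
    simpa using hsym
  -- the five first-order quantities in the goal
  have ha : pdv φ v T = f1 (v, T) := hφv v T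
  have hb : pdT φ v T = f2 (v, T) := hφT v T
  have e2 : (fun T' => pdT φ v T') = fun T' => f2 (v, T') := by funext T'; exact hφT v T'
  have e1 : ∀ b : ℝ, (fun v' => pdT φ v' b) = fun v' => f2 (v', b) := by
    intro b; funext v'; exact hφT v' b
  have e1v : ∀ b : ℝ, (fun v' => pdv φ v' b) = fun v' => f1 (v', b) := by
    intro b; funext v'; exact hφv v' b
  have hTT : pdT (fun v' T' => pdT φ v' T') v T = M := by
    show deriv (fun T' => pdT φ v T') T = M
    rw [e2]; exact (key_T f2 hf2d v T).deriv
  have hTv : pdv (fun v' T' => pdT φ v' T') v T = E := by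
    show deriv (fun v' => pdT φ v' T) v = E
    rw [e1 T]; exact (key_v f2 hf2d v T).deriv
  have hvv : pdv (fun v' T' => pdv φ v' T') v T = A := by
    show deriv (fun v' => pdv φ v' T) v = A
    rw [e1v T]; exact (key_v f1 hf1d v T).deriv
  -- derivatives of pf
  have hpv : pdv pf v T = R * T * A := by
    show deriv (fun v' => pf v' T) v = R * T * A
    have : (fun v' => pf v' T) = fun v' => R * T * f1 (v', T) := by
      funext v'; rw [hp]; simp [hφv]
    rw [this]
    exact ((key_v f1 hf1d v T).const_mul (R * T)).deriv
  have hpT : pdT pf v T = R * f1 (v, T) + R * T * D := by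
    show deriv (fun T' => pf v T') T = _
    have : (fun T' => pf v T') = fun T' => R * T' * f1 (v, T') := by
      funext T'; rw [hp]; simp [hφv]
    rw [this]
    have h := (((hasDerivAt_id T).const_mul R).mul (key_T f1 hf1d v T)).deriv
    simp only [id, Pi.mul_def, Pi.add_def] at h
    rw [h]; ring
  -- derivatives of σf
  have hσv : pdv σf v T = R * (f1 (v, T) + T * E) := by
    show deriv (fun v' => σf v' T) v = _
    have : (fun v' => σf v' T) = fun v' => R * (F (v', T) + T * f2 (v', T)) := by
      funext v'; rw [hσ]; simp [hφT, hF]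
    rw [this]
    have h := (((key_v F hFd v T).add ((key_v f2 hf2d v T).const_mul T)).const_mul R).deriv
    simp only [Pi.add_def] at h
    rw [h]
  have hσT : pdT σf v T = R * (2 * f2 (v, T) + T * M) := by
    show deriv (fun T' => σf v T') T = _
    have : (fun T' => σf v T') = fun T' => R * (F (v, T') + T' * f2 (v, T')) := by
      funext T'; rw [hσ]; simp [hφT, hF]
    rw [this]
    have h := (((key_T F hFd v T).add ((hasDerivAt_id T).mul (key_T f2 hf2d v T))).const_mul R).deriv
    simp only [id, Pi.mul_def, Pi.add_def] at h
    rw [h]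
    have : fderiv ℝ F (v, T) (0, 1) = f2 (v, T) := rfl
    rw [this]; ring
  rw [hpv, hpT, hσv, hσT, hc2, ha, hb, hTT, hTv, hvv, hsymDE]
  have hden' : 2 * f2 (v, T) + T * M ≠ 0 := by rwa [hb, hTT] at hden

  field_simp
  ring
end

section
/- For the reduced van der Waals gas at fixed entropy level with T(v) = c(3v−1)^{−α}, α = 1 + 2/n ∈ (1,2), v > 1/3: the function w(v) = (3v−1)^{1+α} v^{−3} attains its maximum on (1/3, ∞) at v₀ = 1/(2−α), with w(v₀) = (1+α)^{1+α}(2−α)^{2−α}; consequently, if c > (1+α)^{1+α}(2−α)^{2−α}/(4α) then w(v) ≠ 4cα for all v > 1/3, so Q'(v) never vanishes and Q is strictly monotone (invertible) on (1/3, ∞). -/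
/-!
By weighted AM-GM with weights (1+α)/3 and (2-α)/3 at the points (3v-1)/(1+α) and 1/(2-α),
whose weighted mean is v, one gets (3v-1)^{1+α} ≤ (1+α)^{1+α} (2-α)^{2-α} v³, with equality
when the two points coincide, i.e. at v = 1/(2-α). If 4cα exceeds this maximum, then Q' never
vanishes, so by Darboux's theorem it has constant sign on (1/3, ∞).
-/

open Real Set

lemma rpow_mul_rpow_le_weighted_mean_rpow {p q x y : ℝ} (hp : 0 < p) (hq : 0 < q)
    (hx : 0 ≤ x) (hy : 0 ≤ y) :
    x ^ p * y ^ q ≤ ((p * x + q * y) / (p + q)) ^ (p + q) := by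
  have hs : 0 < p + q := add_pos hp hq
  have amgm := geom_mean_le_arith_mean2_weighted (w₁ := p / (p + q)) (w₂ := q / (p + q))
    (div_nonneg hp.le hs.le) (div_nonneg hq.le hs.le) hx hy (by field_simp)
  calc x ^ p * y ^ q = (x ^ (p / (p + q)) * y ^ (q / (p + q))) ^ (p + q) := by
        rw [mul_rpow (by positivity) (by positivity), ← rpow_mul hx, ← rpow_mul hy,
          div_mul_cancel₀ _ hs.ne', div_mul_cancel₀ _ hs.ne']
    _ ≤ (p / (p + q) * x + q / (p + q) * y) ^ (p + q) :=
        rpow_le_rpow (by positivity) amgm hs.le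
    _ = ((p * x + q * y) / (p + q)) ^ (p + q) := by ring_nf

lemma rpow_div_pow_three_le {α v : ℝ} (hα₁ : -1 < α) (hα₂ : α < 2) (hv : 1 / 3 < v) :
    (3 * v - 1) ^ (1 + α) / v ^ 3 ≤ (1 + α) ^ (1 + α) * (2 - α) ^ (2 - α) := by
  have ha : 0 < 1 + α := by linarith
  have hb : 0 < 2 - α := by linarith
  have hx : 0 ≤ 3 * v - 1 := by linarith
  have amgm := rpow_mul_rpow_le_weighted_mean_rpow ha hb
    (div_nonneg hx ha.le) (one_div_nonneg.2 hb.le)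
  have hmean : ((1 + α) * ((3 * v - 1) / (1 + α)) + (2 - α) * (1 / (2 - α)))
      / (1 + α + (2 - α)) = v := by
    field_simp; ring
  rw [hmean, show 1 + α + (2 - α) = ((3 : ℕ) : ℝ) by norm_num, rpow_natCast,
    div_rpow hx ha.le, div_rpow zero_le_one hb.le, one_rpow, div_mul_div_comm, mul_one,
    div_le_iff₀ (by positivity)] at amgm
  rw [div_le_iff₀ (by positivity)]
  linarith

lemma rpow_div_pow_three_at_one_div_two_sub {α : ℝ} (hα₁ : -1 < α) (hα₂ : α < 2) :
    (3 * (1 / (2 - α)) - 1) ^ (1 + α) / (1 / (2 - α)) ^ 3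
      = (1 + α) ^ (1 + α) * (2 - α) ^ (2 - α) := by
  have ha : 0 < 1 + α := by linarith
  have hb : 0 < 2 - α := by linarith
  have hbase : 3 * (1 / (2 - α)) - 1 = (1 + α) / (2 - α) := by field_simp; ring
  have hcube : (2 - α) ^ (1 + α) * (2 - α) ^ (2 - α) = (2 - α) ^ 3 := by
    rw [← rpow_add hb, ← rpow_natCast]; norm_num
  rw [hbase, div_rpow ha.le hb.le, one_div_pow, ← hcube]
  field_simp

lemma strictMonoOn_or_strictAntiOn_of_hasDerivAt_ne_zero {D : Set ℝ} (hD : Convex ℝ D)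
    {f f' : ℝ → ℝ} (hf : ∀ x ∈ D, HasDerivAt f (f' x) x) (hf' : ∀ x ∈ D, f' x ≠ 0) :
    StrictMonoOn f D ∨ StrictAntiOn f D := by
  have hcont : ContinuousOn f D := fun x hx ↦ (hf x hx).continuousAt.continuousWithinAt
  have hderiv : ∀ x ∈ interior D, deriv f x = f' x :=
    fun x hx ↦ (hf x (interior_subset hx)).deriv
  rcases hasDerivWithinAt_forall_lt_or_forall_gt_of_forall_ne hD
    (fun x hx ↦ (hf x hx).hasDerivWithinAt) hf' with hneg | hpos
  · exact .inr <| strictAntiOn_of_deriv_neg hD hcont fun x hx ↦ by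
      rw [hderiv x hx]; exact hneg x (interior_subset hx)
  · exact .inl <| strictMonoOn_of_deriv_pos hD hcont fun x hx ↦ by
      rw [hderiv x hx]; exact hpos x (interior_subset hx)

theorem stmt18_general (n α c : ℝ) (hn : 2 < n) (hα : α = 1 + 2 / n)
    (w : ℝ → ℝ) (hw : w = fun v => (3 * v - 1) ^ (1 + α) / v ^ 3)
    (Q q : ℝ → ℝ)
    (hQ : ∀ v ∈ Set.Ioi (1 / 3 : ℝ), HasDerivAt Q (q v) v)
    (hq : ∀ v ∈ Set.Ioi (1 / 3 : ℝ), (q v = 0 ↔ w v = 4 * c * α)) :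
    (∀ v ∈ Set.Ioi (1 / 3 : ℝ), w v ≤ w (1 / (2 - α)))
    ∧ w (1 / (2 - α)) = (1 + α) ^ (1 + α) * (2 - α) ^ (2 - α)
    ∧ (c > (1 + α) ^ (1 + α) * (2 - α) ^ (2 - α) / (4 * α) →
        (∀ v ∈ Set.Ioi (1 / 3 : ℝ), w v ≠ 4 * c * α)
        ∧ (∀ v ∈ Set.Ioi (1 / 3 : ℝ), q v ≠ 0)
        ∧ (StrictMonoOn Q (Set.Ioi (1 / 3)) ∨ StrictAntiOn Q (Set.Ioi (1 / 3)))) := by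
  have hα₁ : 1 < α := by rw [hα]; linarith [div_pos two_pos (by linarith : (0 : ℝ) < n)]
  have hα₂ : α < 2 := by rw [hα]; linarith [(div_lt_one (by linarith : (0 : ℝ) < n)).2 hn]
  have hmax : w (1 / (2 - α)) = (1 + α) ^ (1 + α) * (2 - α) ^ (2 - α) := by
    rw [hw]; exact rpow_div_pow_three_at_one_div_two_sub (by linarith) hα₂
  have hle : ∀ v ∈ Ioi (1 / 3 : ℝ), w v ≤ w (1 / (2 - α)) := fun v hv ↦ by
    rw [hmax, hw]; exact rpow_div_pow_three_le (by linarith) hα₂ hv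
  refine ⟨hle, hmax, fun hc ↦ ?_⟩
  have hne : ∀ v ∈ Ioi (1 / 3 : ℝ), w v ≠ 4 * c * α := fun v hv ↦ by
    rw [gt_iff_lt, div_lt_iff₀ (by linarith)] at hc
    exact ((hle v hv).trans_lt (by linarith)).ne
  have hq₀ : ∀ v ∈ Ioi (1 / 3 : ℝ), q v ≠ 0 := fun v hv h ↦ hne v hv ((hq v hv).1 h)
  exact ⟨hne, hq₀, strictMonoOn_or_strictAntiOn_of_hasDerivAt_ne_zero (convex_Ioi _) hQ hq₀⟩

/-- van der Waals filtration invertibility: for α = 1 + 2/n ∈ (1,2),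
w(v) = (3v−1)^{1+α}/v³ attains its maximum on (1/3,∞) at v₀ = 1/(2−α) with
w(v₀) = (1+α)^{1+α}(2−α)^{2−α}; consequently if
c > (1+α)^{1+α}(2−α)^{2−α}/(4α) then w(v) ≠ 4cα for all v > 1/3, so Q'
never vanishes and Q is strictly monotone on (1/3,∞). -/
theorem stmt18 (n α c : ℝ) (hn : 2 < n) (hα : α = 1 + 2 / n) (hc : 0 < c)
    (w : ℝ → ℝ) (hw : w = fun v => (3 * v - 1) ^ (1 + α) / v ^ 3)
    (Q q : ℝ → ℝ)
    (hQ : ∀ v ∈ Set.Ioi (1 / 3 : ℝ), HasDerivAt Q (q v) v)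
    (hq : ∀ v ∈ Set.Ioi (1 / 3 : ℝ), (q v = 0 ↔ w v = 4 * c * α)) :
    (∀ v ∈ Set.Ioi (1 / 3 : ℝ), w v ≤ w (1 / (2 - α)))
    ∧ w (1 / (2 - α)) = (1 + α) ^ (1 + α) * (2 - α) ^ (2 - α)
    ∧ (c > (1 + α) ^ (1 + α) * (2 - α) ^ (2 - α) / (4 * α) →
        (∀ v ∈ Set.Ioi (1 / 3 : ℝ), w v ≠ 4 * c * α)
        ∧ (∀ v ∈ Set.Ioi (1 / 3 : ℝ), q v ≠ 0)
        ∧ (StrictMonoOn Q (Set.Ioi (1 / 3)) ∨ StrictAntiOn Q (Set.Ioi (1 / 3)))) :=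
  stmt18_general n α c hn hα w hw Q q hQ hq
end

section
/- For α ∈ (1,2), the cubic equation (α−2)v³ + 3αv² + (α+2)v − α + 4 = 0 has a real root v₀ > 1, and for the reduced Peng–Robinson gas at fixed entropy with p(v) = c(v−1)^{−α} − 1/(v²+2v−1): if c > (2/α)·(v₀+1)(v₀−1)^{α+1}/(v₀²+2v₀−1)², then p'(v) < 0 for all v > 1, hence Q(v) (with Q'(v) proportional to −p'(v)·positive factor) is strictly monotone on (1, ∞). -/
/-!
Write `f(v) = (v+1)(v-1)^(α+1)/(v²+2v-1)²`. For `-1 < α < 2`, `f` is continuous on `[1, ∞)`,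
vanishes at `1`, is positive at `2` and is dominated by `2 v^(α-2) → 0`, so it attains its
maximum on `[1, ∞)` at some `v₀ > 1`. There `f'(v₀) = 0`, and
`f'(v) = (v-1)^α · P(v) / (v²+2v-1)³` with `P` the cubic of the statement, so `P(v₀) = 0`.
Finally `p'(v) = (v-1)^(-α-1) (2 f(v) - cα)`, which is negative once `cα > 2 f(v₀)`;
then `Q' = -g p' > 0` makes `Q` strictly increasing.
-/

open Set Filter Topology

lemma strictMonoOn_Ioi_of_hasDerivAt_pos {f f' : ℝ → ℝ} {a : ℝ}
    (hf : ∀ x ∈ Ioi a, HasDerivAt f (f' x) x) (hf' : ∀ x ∈ Ioi a, 0 < f' x) :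
    StrictMonoOn f (Ioi a) :=
  strictMonoOn_of_deriv_pos (convex_Ioi a) (fun x hx => (hf x hx).continuousAt.continuousWithinAt)
    fun x hx => by
      rw [interior_Ioi] at hx
      rw [(hf x hx).deriv]
      exact hf' x hx

namespace PengRobinson

noncomputable def ratio (α v : ℝ) : ℝ := (v + 1) * (v - 1) ^ (α + 1) / (v ^ 2 + 2 * v - 1) ^ 2

def cubic (α v : ℝ) : ℝ :=
  (α - 2) * v ^ 3 + 3 * α * v ^ 2 + (α + 2) * v - α + 4

/-- `p'(v)` for the reduced pressure `p(v) = c(v-1)^(-α) - 1/(v²+2v-1)`. -/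
noncomputable def pressureDeriv (c α v : ℝ) : ℝ :=
  -(c * α) * (v - 1) ^ (-α - 1) + 2 * (v + 1) / (v ^ 2 + 2 * v - 1) ^ 2

lemma quadratic_pos {v : ℝ} (hv : 1 ≤ v) : 0 < v ^ 2 + 2 * v - 1 := by nlinarith

variable {α : ℝ}

lemma ratio_nonneg {v : ℝ} (hv : 1 ≤ v) : 0 ≤ ratio α v := by
  have := Real.rpow_nonneg (sub_nonneg.2 hv) (α + 1)
  unfold ratio
  positivity

lemma ratio_one (hα : -1 < α) : ratio α 1 = 0 := by
  simp [ratio, Real.zero_rpow (by linarith : α + 1 ≠ 0)]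

lemma ratio_two : ratio α 2 = 3 / 49 := by
  norm_num [ratio]

lemma continuousOn_ratio (hα : -1 ≤ α) : ContinuousOn (ratio α) (Ici 1) := by
  have hpow : ContinuousOn (fun v : ℝ => (v - 1) ^ (α + 1)) (Ici 1) :=
    (continuousOn_id.sub continuousOn_const).rpow_const fun _ _ => Or.inr (by linarith)
  exact ((continuousOn_id.add continuousOn_const).mul hpow).div (by fun_prop)
    fun v hv => (pow_pos (quadratic_pos hv) 2).ne'

lemma ratio_le_two_mul_rpow (hα : -1 ≤ α) {v : ℝ} (hv : 1 ≤ v) :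
    ratio α v ≤ 2 * v ^ (α - 2) := by
  have hv0 : 0 < v := by linarith
  have hnum : (v + 1) * (v - 1) ^ (α + 1) ≤ 2 * v * v ^ (α + 1) :=
    mul_le_mul (by linarith) (Real.rpow_le_rpow (by linarith) (by linarith) (by linarith))
      (Real.rpow_nonneg (by linarith) _) (by positivity)
  have hden : (v ^ 2) ^ 2 ≤ (v ^ 2 + 2 * v - 1) ^ 2 := by nlinarith
  calc ratio α v ≤ 2 * v * v ^ (α + 1) / (v ^ 2) ^ 2 :=
        div_le_div₀ (by positivity) hnum (by positivity) hden
    _ = 2 * v ^ (α - 2) := by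
        rw [show α + 1 = α - 2 + (3 : ℕ) by push_cast; ring, Real.rpow_add_natCast hv0.ne']
        field_simp

lemma tendsto_ratio_atTop (hα₁ : -1 ≤ α) (hα₂ : α < 2) :
    Tendsto (ratio α) atTop (𝓝 0) := by
  have hdom : Tendsto (fun v : ℝ => 2 * v ^ (α - 2)) atTop (𝓝 0) := by
    simpa [neg_sub] using (tendsto_rpow_neg_atTop (y := 2 - α) (by linarith)).const_mul 2
  exact tendsto_of_tendsto_of_tendsto_of_le_of_le' tendsto_const_nhds hdom
    (eventually_ge_atTop 1 |>.mono fun _ => ratio_nonneg)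
    (eventually_ge_atTop 1 |>.mono fun _ => ratio_le_two_mul_rpow hα₁)

lemma hasDerivAt_ratio {v : ℝ} (hv : 1 < v) :
    HasDerivAt (ratio α) ((v - 1) ^ α * cubic α v / (v ^ 2 + 2 * v - 1) ^ 3) v := by
  have hw : v - 1 ≠ 0 := by linarith
  have hD := quadratic_pos hv.le
  have hnum : HasDerivAt (fun x : ℝ => (x + 1) * (x - 1) ^ (α + 1))
      (1 * (v - 1) ^ (α + 1) + (v + 1) * (1 * (α + 1) * (v - 1) ^ (α + 1 - 1))) v :=
    ((hasDerivAt_id v).add_const 1).mul (((hasDerivAt_id v).sub_const 1).rpow_const (Or.inl hw))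
  have hden : HasDerivAt (fun x : ℝ => (x ^ 2 + 2 * x - 1) ^ 2)
      (2 * (v ^ 2 + 2 * v - 1) * (2 * v + 2)) v := by
    refine ((((hasDerivAt_pow 2 v).add ((hasDerivAt_id v).const_mul 2)).sub_const 1).pow 2
      ).congr_deriv ?_
    simp only [id, Pi.add_apply]
    ring
  refine (hnum.div hden (pow_ne_zero 2 hD.ne')).congr_deriv ?_
  rw [add_sub_cancel_right, Real.rpow_add_one hw]
  field_simp
  unfold cubic
  ring

lemma cubic_eq_zero_of_isLocalMax {v : ℝ} (hv : 1 < v) (hmax : IsLocalMax (ratio α) v) :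
    cubic α v = 0 := by
  have h := hmax.hasDerivAt_eq_zero (hasDerivAt_ratio hv)
  have hw := Real.rpow_pos_of_pos (sub_pos.2 hv) α
  have hD := quadratic_pos hv.le
  simpa [hw.ne', hD.ne'] using h

lemma exists_isMaxOn_ratio (hα₁ : -1 < α) (hα₂ : α < 2) :
    ∃ v₀, 1 < v₀ ∧ IsMaxOn (ratio α) (Ici 1) v₀ := by
  obtain ⟨M, hM⟩ := eventually_atTop.1 <|
    (tendsto_ratio_atTop hα₁.le hα₂).eventually
      (gt_mem_nhds (show (0 : ℝ) < ratio α 2 by rw [ratio_two]; norm_num))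
  have hfar : ∀ᶠ v in cocompact ℝ ⊓ 𝓟 (Ici 1), ratio α v ≤ ratio α 2 :=
    (hasBasis_cocompact.inf_principal _).eventually_iff.2
      ⟨Icc 1 M, isCompact_Icc, fun v ⟨hvK, hv⟩ => (hM v (by_contra fun h => hvK
        ⟨hv, (not_le.1 h).le⟩)).le⟩
  obtain ⟨v₀, hv₀, hmax⟩ :=
    (continuousOn_ratio hα₁.le).exists_isMaxOn' isClosed_Ici (by norm_num) hfar
  refine ⟨v₀, lt_of_le_of_ne hv₀ fun h => ?_, hmax⟩
  have := isMaxOn_iff.1 hmax 2 (by norm_num)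
  rw [← h, ratio_one hα₁, ratio_two] at this
  norm_num at this

lemma pressureDeriv_eq {c v : ℝ} (hv : 1 < v) :
    pressureDeriv c α v = (v - 1) ^ (-α - 1) * (2 * ratio α v - c * α) := by
  have hinv : (v - 1) ^ (-α - 1) * (v - 1) ^ (α + 1) = 1 := by
    rw [← Real.rpow_add (by linarith)]
    simp
  unfold pressureDeriv ratio
  linear_combination -(2 * (v + 1) / (v ^ 2 + 2 * v - 1) ^ 2) * hinv

lemma pressureDeriv_neg {c v : ℝ} (hv : 1 < v) (h : 2 * ratio α v < c * α) :
    pressureDeriv c α v < 0 := by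
  rw [pressureDeriv_eq hv]
  exact mul_neg_of_pos_of_neg (Real.rpow_pos_of_pos (by linarith) _) (by linarith)

end PengRobinson

open PengRobinson

theorem stmt19_general (n α c : ℝ) (hn : 2 < n) (hα : α = 1 + 2 / n)
    (dp : ℝ → ℝ)
    (hdp : dp = fun v => -(c * α) * (v - 1) ^ (-α - 1)
        + 2 * (v + 1) / (v ^ 2 + 2 * v - 1) ^ 2)
    (Q q g : ℝ → ℝ)
    (hQ : ∀ v ∈ Set.Ioi (1 : ℝ), HasDerivAt Q (q v) v)
    (hg : ∀ v ∈ Set.Ioi (1 : ℝ), 0 < g v)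
    (hq : ∀ v ∈ Set.Ioi (1 : ℝ), q v = -(g v) * dp v) :
    ∃ v₀ : ℝ, 1 < v₀
      ∧ (α - 2) * v₀ ^ 3 + 3 * α * v₀ ^ 2 + (α + 2) * v₀ - α + 4 = 0
      ∧ (∀ v ∈ Set.Ioi (1 : ℝ),
          (v + 1) * (v - 1) ^ (α + 1) / (v ^ 2 + 2 * v - 1) ^ 2
            ≤ (v₀ + 1) * (v₀ - 1) ^ (α + 1) / (v₀ ^ 2 + 2 * v₀ - 1) ^ 2)
      ∧ (c > 2 / α * ((v₀ + 1) * (v₀ - 1) ^ (α + 1) / (v₀ ^ 2 + 2 * v₀ - 1) ^ 2) →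
          (∀ v ∈ Set.Ioi (1 : ℝ), dp v < 0) ∧ StrictMonoOn Q (Set.Ioi 1)) := by
  have hα₁ : 1 < α := by
    rw [hα]
    linarith [div_pos two_pos (by linarith : (0 : ℝ) < n)]
  have hα₂ : α < 2 := by
    rw [hα]
    linarith [(div_lt_one (by linarith : (0 : ℝ) < n)).2 hn]
  obtain ⟨v₀, hv₀, hmax⟩ := exists_isMaxOn_ratio (by linarith) hα₂
  have hbound : ∀ v ∈ Ioi (1 : ℝ), ratio α v ≤ ratio α v₀ := fun v hv =>
    hmax (Ioi_subset_Ici_self hv)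
  refine ⟨v₀, hv₀, cubic_eq_zero_of_isLocalMax hv₀ (hmax.isLocalMax (Ici_mem_nhds hv₀)),
    hbound, fun hlarge => ?_⟩
  have hratio_lt : 2 * ratio α v₀ < c * α := by
    rw [gt_iff_lt, div_mul_eq_mul_div, div_lt_iff₀ (by linarith)] at hlarge
    unfold ratio
    linarith
  have hdp_neg : ∀ v ∈ Ioi (1 : ℝ), dp v < 0 := fun v hv =>
    hdp ▸ pressureDeriv_neg hv (by linarith [hbound v hv])
  refine ⟨hdp_neg, strictMonoOn_Ioi_of_hasDerivAt_pos hQ fun v hv => ?_⟩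
  rw [hq v hv]
  exact mul_pos_of_neg_of_neg (neg_neg_iff_pos.2 (hg v hv)) (hdp_neg v hv)

/-- Peng–Robinson filtration invertibility: for α = 1 + 2/n ∈ (1,2), the cubic
(α−2)v³ + 3αv² + (α+2)v − α + 4 = 0 has a real root v₀ > 1 maximizing
(v+1)(v−1)^{α+1}/(v²+2v−1)² on (1,∞), and if
c > (2/α)(v₀+1)(v₀−1)^{α+1}/(v₀²+2v₀−1)² then
p'(v) = −cα(v−1)^{−α−1} + 2(v+1)/(v²+2v−1)² < 0 for all v > 1, hence Q
(whose derivative is −p' times a positive factor) is strictly monotone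
on (1,∞). -/
theorem stmt19 (n α c : ℝ) (hn : 2 < n) (hα : α = 1 + 2 / n) (hc : 0 < c)
    (dp : ℝ → ℝ)
    (hdp : dp = fun v => -(c * α) * (v - 1) ^ (-α - 1)
        + 2 * (v + 1) / (v ^ 2 + 2 * v - 1) ^ 2)
    (Q q g : ℝ → ℝ)
    (hQ : ∀ v ∈ Set.Ioi (1 : ℝ), HasDerivAt Q (q v) v)
    (hg : ∀ v ∈ Set.Ioi (1 : ℝ), 0 < g v)
    (hq : ∀ v ∈ Set.Ioi (1 : ℝ), q v = -(g v) * dp v) :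
    ∃ v₀ : ℝ, 1 < v₀
      ∧ (α - 2) * v₀ ^ 3 + 3 * α * v₀ ^ 2 + (α + 2) * v₀ - α + 4 = 0
      ∧ (∀ v ∈ Set.Ioi (1 : ℝ),
          (v + 1) * (v - 1) ^ (α + 1) / (v ^ 2 + 2 * v - 1) ^ 2
            ≤ (v₀ + 1) * (v₀ - 1) ^ (α + 1) / (v₀ ^ 2 + 2 * v₀ - 1) ^ 2)
      ∧ (c > 2 / α * ((v₀ + 1) * (v₀ - 1) ^ (α + 1) / (v₀ ^ 2 + 2 * v₀ - 1) ^ 2) →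
          (∀ v ∈ Set.Ioi (1 : ℝ), dp v < 0) ∧ StrictMonoOn Q (Set.Ioi 1)) :=
  stmt19_general n α c hn hα dp hdp Q q g hQ hg hq
end
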